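/- Let f be a partial Boolean function and ε ∈ [0, 1/2). Then R_ε(f) ≥ R̄_ε(f) ≥ (1 − 2ε) · RS(f). In particular, randomized sabotage complexity is a lower bound on bounded-error randomized query complexity: R(f) = Ω(RS(f)). -/

import Mathlib

/-! ### Decision trees -/

/-- A deterministic decision tree querying positions of type `ι`, receiving answers
in `α`, and producing an output in `β`. -/
inductive DTree (ι α β : Type) : Type
  | leaf (b : β) : DTree ι α β
  | node (i : ι) (next : α → DTree ι α β) : DTree ι α β

namespace DTree

variable {ι α β : Type}

/-- The output of a decision tree on input `x`. -/
def output : DTree ι α β → (ι → α) → β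
  | leaf b, _ => b
  | node i next, x => (next (x i)).output x

/-- The number of queries made by a decision tree on input `x`. -/
def cost : DTree ι α β → (ι → α) → ℕ
  | leaf _, _ => 0
  | node i next, x => (next (x i)).cost x + 1

/-- The set of positions queried by a decision tree on input `x`. -/
def queries : DTree ι α β → (ι → α) → Set ι
  | leaf _, _ => ∅
  | node i next, x => insert i ((next (x i)).queries x)

end DTree

/-- A partial function on inputs `ι → α` with outputs in `β`; `none` means undefined
(the domain is the set of inputs mapped to `some` value). -/
abbrev PFn (ι α β : Type) := (ι → α) → Option β

/-- `t` computes the partial function `f` (correct on every input of the domain). -/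
def DTree.computesP {ι α β : Type} (t : DTree ι α β) (f : PFn ι α β) : Prop :=
  ∀ x b, f x = some b → t.output x = b

/-- Deterministic query complexity `D(f)`. -/
noncomputable def Dq {ι α β : Type} (f : PFn ι α β) : ℝ :=
  sInf {T : ℝ | 0 ≤ T ∧ ∃ t : DTree ι α β, t.computesP f ∧ ∀ x, (t.cost x : ℝ) ≤ T}

/-! ### Randomized query algorithms -/

/-- A randomized query algorithm: a finitely supported probability distribution over
deterministic decision trees. -/
structure RandAlg (ι α β : Type) where
  Ω : Type
  [fin : Fintype Ω]
  p : Ω → ℝ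
  nonneg : ∀ ω, 0 ≤ p ω
  sum_one : ∑ ω, p ω = 1
  tree : Ω → DTree ι α β

namespace RandAlg

variable {ι α β : Type}

/-- Expected number of queries of `A` on input `x`. -/
noncomputable def expCost (A : RandAlg ι α β) (x : ι → α) : ℝ :=
  letI := A.fin
  ∑ ω, A.p ω * ((A.tree ω).cost x : ℝ)

open Classical in
/-- Probability that `A` outputs `b` on input `x`. -/
noncomputable def succProb (A : RandAlg ι α β) (x : ι → α) (b : β) : ℝ :=
  letI := A.fin
  ∑ ω, if (A.tree ω).output x = b then A.p ω else 0

/-- `A` computes `f` with error at most `ε`: on every input of the domain the correct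
output is produced with probability at least `1 - ε`. -/
def Computes (A : RandAlg ι α β) (f : PFn ι α β) (ε : ℝ) : Prop :=
  ∀ x b, f x = some b → 1 - ε ≤ A.succProb x b

/-- The worst-case cost of `A` (over all inputs and all trees in the support) is at most `T`. -/
def WCostLe (A : RandAlg ι α β) (T : ℝ) : Prop :=
  ∀ ω, A.p ω ≠ 0 → ∀ x, ((A.tree ω).cost x : ℝ) ≤ T

/-- The expected cost of `A` on every input of the domain of `f` is at most `T`. -/
def ECostLe (A : RandAlg ι α β) (f : PFn ι α β) (T : ℝ) : Prop :=
  ∀ x, (f x).isSome → A.expCost x ≤ T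

end RandAlg

/-- `R_ε(f)`: minimum worst-case cost of an `ε`-error randomized algorithm for `f`. -/
noncomputable def Rw {ι α β : Type} (ε : ℝ) (f : PFn ι α β) : ℝ :=
  sInf {T : ℝ | 0 ≤ T ∧ ∃ A : RandAlg ι α β, A.Computes f ε ∧ A.WCostLe T}

/-- `R̄_ε(f)`: minimum expected cost of an `ε`-error randomized algorithm for `f`. -/
noncomputable def Rbar {ι α β : Type} (ε : ℝ) (f : PFn ι α β) : ℝ :=
  sInf {T : ℝ | 0 ≤ T ∧ ∃ A : RandAlg ι α β, A.Computes f ε ∧ A.ECostLe f T}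

/-- `R₀(f)`: zero-error expected randomized query complexity. -/
noncomputable def R0 {ι α β : Type} (f : PFn ι α β) : ℝ := Rbar 0 f

/-- `R(f) := R_{1/3}(f)`: bounded-error randomized query complexity. -/
noncomputable def Rb {ι α β : Type} (f : PFn ι α β) : ℝ := Rw (1/3) f

/-- The total function `f` viewed as a partial function. -/
def tot {ι α β : Type} (f : (ι → α) → β) : PFn ι α β := fun x => some (f x)


/-! ### Sabotage complexity and composition -/

/-- The four-letter alphabet `{0, 1, *, †}` of sabotaged inputs. -/
inductive Sab : Type
  | zero : Sab
  | one : Sab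
  | star : Sab
  | dagger : Sab
deriving DecidableEq

/-- Embedding of Boolean values into the sabotage alphabet. -/
def Sab.ofBool : Bool → Sab
  | false => Sab.zero
  | true => Sab.one

/-- `p` is consistent with the Boolean input `x`: wherever `p` has a Boolean entry,
it agrees with `x`. -/
def SabConsistent {ι : Type} (p : ι → Sab) (x : ι → Bool) : Prop :=
  ∀ i, p i = Sab.ofBool (x i) ∨ p i = Sab.star ∨ p i = Sab.dagger

/-- `p` is a sabotaged input for `f` using the sabotage symbol `s`: all entries of `p`
lie in `{0, 1, s}` and `p` is consistent with both a `0`-input and a `1`-input of `f`. -/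
def IsSabotaged {ι : Type} (f : PFn ι Bool Bool) (s : Sab) (p : ι → Sab) : Prop :=
  (∀ i, p i = Sab.zero ∨ p i = Sab.one ∨ p i = s) ∧
  ∃ x y, (f x).isSome ∧ (f y).isSome ∧ f x ≠ f y ∧ SabConsistent p x ∧ SabConsistent p y

open Classical in
/-- The sabotage problem `f_sab` associated with `f`: it is `0` on `P_f` (inputs
sabotaged with `*`) and `1` on `P_f†` (inputs sabotaged with `†`). -/
noncomputable def fsab {ι : Type} (f : PFn ι Bool Bool) : PFn ι Sab Bool :=
  fun p =>
    if IsSabotaged f Sab.star p then some false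
    else if IsSabotaged f Sab.dagger p then some true
    else none

open Classical in
/-- `f_usab`: the restriction of `f_sab` to inputs having exactly one `*` or `†` entry. -/
noncomputable def fusab {ι : Type} (f : PFn ι Bool Bool) : PFn ι Sab Bool :=
  fun p =>
    if ∃! i, p i = Sab.star ∨ p i = Sab.dagger then fsab f p else none

/-- Randomized sabotage complexity `RS(f) := R₀(f_sab)`. -/
noncomputable def RS {ι : Type} (f : PFn ι Bool Bool) : ℝ := R0 (fsab f)

/-- `RS_u(f) := R₀(f_usab)` (this is `0` automatically when `f_usab` has empty domain). -/
noncomputable def RSu {ι : Type} (f : PFn ι Bool Bool) : ℝ := R0 (fusab f)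

open Classical in
/-- Composition `f ∘ g` of partial functions: defined on an input exactly when every
inner copy of `g` is defined and the tuple of inner values lies in the domain of `f`. -/
noncomputable def pcomp {κ ι α β γ : Type} (f : PFn κ β γ) (g : PFn ι α β) :
    PFn (κ × ι) α γ :=
  fun x =>
    if h : ∀ i : κ, (g fun j => x (i, j)).isSome then
      f fun i => (g fun j => x (i, j)).get (h i)
    else none

/-- Index types for iterated self-composition. -/
def IterIdx (κ : Type) : ℕ → Type
  | 0 => κ
  | n + 1 => κ × IterIdx κ n

/-- `iterComp f n` is `f` composed with itself `n + 1` times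
(`iterComp f 0 = f`, `iterComp f (n+1) = f ∘ iterComp f n`). -/
noncomputable def iterComp {κ : Type} (f : PFn κ Bool Bool) : (n : ℕ) → PFn (IterIdx κ n) Bool Bool
  | 0 => f
  | n + 1 => pcomp f (iterComp f n)

/-! ### The index function -/

/-- The value of a bit-string read as a binary number (bit `i` has weight `2^i`). -/
def binval {b : ℕ} (x : Fin b → Bool) : ℕ := ∑ i, if x i then 2 ^ (i : ℕ) else 0

theorem sum_range_two_pow (b : ℕ) : ∑ i ∈ Finset.range b, 2 ^ i = 2 ^ b - 1 := by
  induction b with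
  | zero => simp
  | succ n ih =>
    rw [Finset.sum_range_succ, ih, pow_succ]
    have : 1 ≤ 2 ^ n := Nat.one_le_two_pow
    omega

theorem binval_lt {b : ℕ} (x : Fin b → Bool) : binval x < 2 ^ b := by
  have h1 : binval x ≤ ∑ i : Fin b, 2 ^ (i : ℕ) := by
    refine Finset.sum_le_sum fun i _ => ?_
    split <;> simp
  have h2 : ∑ i : Fin b, 2 ^ (i : ℕ) = 2 ^ b - 1 := by
    rw [Fin.sum_univ_eq_sum_range (fun i => 2 ^ i) b]
    exact sum_range_two_pow b
  have h3 : 0 < 2 ^ b := Nat.pow_pos (by norm_num)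
  omega

/-- The largest `c` with `c + 2^c ≤ m`. -/
def indexC (m : ℕ) : ℕ := Nat.findGreatest (fun c => c + 2 ^ c ≤ m) m

/-- The index function `Ind_m : {0,1}^m → {0,1}`: the first `c` bits (where `c` is the
largest integer with `c + 2^c ≤ m`) are read as a binary address `y` into the next
`2^c` bits, and the output is the addressed bit. -/
def IndFn (m : ℕ) : PFn (Fin m) Bool Bool :=
  fun x =>
    let c := indexC m
    let y := ∑ i : Fin m, if (i : ℕ) < c ∧ x i = true then 2 ^ (i : ℕ) else 0
    if h : c + y < m then some (x ⟨c + y, h⟩) else none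

/-- `f^{⊕c}_ind`: the index function on `c + 2^c` bits with `f` composed into each of
the `c` address bits only. -/
def findex {n : ℕ} (f : PFn (Fin n) Bool Bool) (c : ℕ) :
    PFn ((Fin c × Fin n) ⊕ Fin (2 ^ c)) Bool Bool :=
  fun x =>
    if h : ∀ i : Fin c, (f fun j => x (Sum.inl (i, j))).isSome then
      some (x (Sum.inr ⟨binval fun i => (f fun j => x (Sum.inl (i, j))).get (h i),
        binval_lt _⟩))
    else none

/-!
Let `A` be an `ε`-error algorithm for `f` of expected cost `T`, and let `p` be a sabotaged
input, consistent with a `0`-input `x` and a `1`-input `y`. Run a tree of `A` on `p`, stopping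
as soon as it queries a sabotaged entry, whose symbol answers `f_sab`. A run that sees no
sabotaged entry follows the same path on `x` and on `y`, so the tree errs on one of them; this
happens with probability at most `2ε`, and then we restart with fresh randomness. The run on
`p` is never longer than the run on `x`, so the expected cost `E` of this zero-error algorithm
satisfies `E ≤ T + 2ε E`, i.e. `E ≤ T / (1 - 2ε)`. Since algorithms are finitely supported,
we stop after `k` rounds and query all of `p`, which costs `n (2ε)^k` more, and let `k → ∞`.
-/

attribute [instance] RandAlg.fin

/-- The value of `f_sab` on an input sabotaged with the symbol `s`. -/
def Sab.isDagger : Sab → Bool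
  | .dagger => true
  | _ => false

instance : Nonempty Sab := ⟨.zero⟩

theorem Sab.ofBool_injective : Function.Injective Sab.ofBool := by
  intro a b h
  cases a <;> cases b <;> first | rfl | cases h

namespace DTree

variable {ι α β : Type}

def graft : DTree ι α (Option β) → DTree ι α β → DTree ι α β
  | .leaf none, t => t
  | .leaf (some b), _ => .leaf b
  | .node i next, t => .node i fun a => (next a).graft t

theorem output_graft_of_some {u : DTree ι α (Option β)} {t : DTree ι α β} {x : ι → α} {b : β}
    (h : u.output x = some b) : (u.graft t).output x = b := by
  induction u with
  | leaf o => subst h; rfl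
  | node i next ih => exact ih (x i) h

theorem output_graft_of_none {u : DTree ι α (Option β)} {t : DTree ι α β} {x : ι → α}
    (h : u.output x = none) : (u.graft t).output x = t.output x := by
  induction u with
  | leaf o => subst h; rfl
  | node i next ih => exact ih (x i) h

theorem cost_graft_of_some {u : DTree ι α (Option β)} {t : DTree ι α β} {x : ι → α} {b : β}
    (h : u.output x = some b) : (u.graft t).cost x = u.cost x := by
  induction u with
  | leaf o => subst h; rfl
  | node i next ih => exact congrArg (· + 1) (ih (x i) h)

theorem cost_graft_of_none {u : DTree ι α (Option β)} {t : DTree ι α β} {x : ι → α}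
    (h : u.output x = none) : (u.graft t).cost x = u.cost x + t.cost x := by
  induction u with
  | leaf o => subst h; simp [graft, cost]
  | node i next ih => simp only [graft, cost, ih (x i) h]; ring

/-- Run a tree on a sabotaged input, answering `f_sab` as soon as a sabotaged entry is
queried; the output `none` means that no sabotaged entry was queried. -/
def sabify : DTree ι Bool β → DTree ι Sab (Option Bool)
  | .leaf _ => .leaf none
  | .node i next => .node i fun
      | .zero => (next false).sabify
      | .one => (next true).sabify
      | s => .leaf (some s.isDagger)

theorem cost_sabify_le {t : DTree ι Bool β} {p : ι → Sab} {x : ι → Bool}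
    (hx : SabConsistent p x) : t.sabify.cost p ≤ t.cost x := by
  induction t with
  | leaf b => exact Nat.zero_le _
  | node i next ih =>
    rcases hx i with h | h | h
    · have := ih (x i)
      cases hxi : x i <;> simp_all [sabify, cost, Sab.ofBool]
    all_goals simp [sabify, cost, h]

theorem output_eq_of_sabify_eq_none {t : DTree ι Bool β} {p : ι → Sab} {x y : ι → Bool}
    (h : t.sabify.output p = none) (hx : SabConsistent p x) (hy : SabConsistent p y) :
    t.output x = t.output y := by
  induction t with
  | leaf b => rfl
  | node i next ih =>
    have hunmarked : ∀ z : ι → Bool, SabConsistent p z → p i = Sab.ofBool (z i) := by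
      intro z hz
      rcases hz i with hi | hi | hi
      · exact hi
      all_goals simp [sabify, output, hi, Sab.isDagger] at h
    have hxy : x i = y i := Sab.ofBool_injective ((hunmarked x hx).symm.trans (hunmarked y hy))
    have hpx := hunmarked x hx
    simp only [output] at h ⊢
    rw [← hxy]
    cases hxi : x i <;> simp_all [sabify, output, Sab.ofBool]

theorem sabify_output_eq_some {t : DTree ι Bool β} {p : ι → Sab} {s : Sab} {b : Bool}
    (hp : ∀ i, p i = Sab.zero ∨ p i = Sab.one ∨ p i = s) (h : t.sabify.output p = some b) :
    b = s.isDagger := by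
  induction t with
  | leaf _ => cases h
  | node i next ih =>
    rcases hp i with hi | hi | hi
    · exact ih false (by simpa [sabify, output, hi] using h)
    · exact ih true (by simpa [sabify, output, hi] using h)
    · subst hi
      cases hs : p i <;> simp_all [sabify, output]

def queryAll [DecidableEq ι] (out : (ι → α) → β) : List ι → (ι → α) → DTree ι α β
  | [], g => .leaf (out g)
  | i :: l, g => .node i fun a => queryAll out l (Function.update g i a)

theorem cost_queryAll [DecidableEq ι] (out : (ι → α) → β) (l : List ι) (g x : ι → α) :
    (queryAll out l g).cost x = l.length := by
  induction l generalizing g with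
  | nil => rfl
  | cons i l ih => simp [queryAll, cost, ih]

theorem output_queryAll [DecidableEq ι] (out : (ι → α) → β) (l : List ι) (g x : ι → α) :
    (queryAll out l g).output x = out fun j => if j ∈ l then x j else g j := by
  induction l generalizing g with
  | nil => rfl
  | cons i l ih =>
    simp only [queryAll, output, ih]
    congr 1
    funext j
    by_cases hj : j = i
    · subst hj; simp
    · simp [hj]

theorem exists_computesP_cost_le_card [Fintype ι] [Nonempty α] [Nonempty β] (f : PFn ι α β) :
    ∃ t : DTree ι α β, t.computesP f ∧ ∀ x, t.cost x ≤ Fintype.card ι := by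
  classical
  let out (x : ι → α) : β := (f x).getD (Classical.arbitrary β)
  refine ⟨queryAll out Finset.univ.toList (fun _ => Classical.arbitrary α), ?_, ?_⟩
  · intro x b hb
    simp [output_queryAll, out, hb]
  · intro x
    simp [cost_queryAll]

end DTree

namespace RandAlg

variable {ι α β : Type}

def ofTree (t : DTree ι α β) : RandAlg ι α β where
  Ω := Unit
  p _ := 1
  nonneg _ := zero_le_one
  sum_one := by simp
  tree _ := t

def map {ι' α' β' : Type} (A : RandAlg ι α β) (g : DTree ι α β → DTree ι' α' β') :
    RandAlg ι' α' β' :=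
  { A with tree := g ∘ A.tree }

noncomputable def graft (U : RandAlg ι α (Option β)) (B : RandAlg ι α β) : RandAlg ι α β where
  Ω := U.Ω × B.Ω
  p w := U.p w.1 * B.p w.2
  nonneg w := mul_nonneg (U.nonneg _) (B.nonneg _)
  sum_one := by simp [Fintype.sum_prod_type, ← Finset.mul_sum, B.sum_one, U.sum_one]
  tree w := (U.tree w.1).graft (B.tree w.2)

open Classical in
noncomputable def prob (A : RandAlg ι α β) (S : DTree ι α β → Prop) : ℝ :=
  ∑ ω, if S (A.tree ω) then A.p ω else 0

theorem prob_le_add (A : RandAlg ι α β) {S S₁ S₂ : DTree ι α β → Prop}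
    (h : ∀ t, S t → S₁ t ∨ S₂ t) : A.prob S ≤ A.prob S₁ + A.prob S₂ := by
  classical
  rw [prob, prob, prob, ← Finset.sum_add_distrib]
  refine Finset.sum_le_sum fun ω _ => ?_
  have := A.nonneg ω
  by_cases hS : S (A.tree ω)
  · rcases h _ hS with h1 | h2 <;> split_ifs <;> linarith
  · split_ifs <;> linarith

theorem prob_not_add_succProb (A : RandAlg ι α β) (x : ι → α) (b : β) :
    A.prob (fun t => t.output x ≠ b) + A.succProb x b = 1 := by
  classical
  rw [prob, succProb, ← Finset.sum_add_distrib, ← A.sum_one]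
  refine Finset.sum_congr rfl fun ω _ => ?_
  split_ifs <;> simp_all

theorem Computes.prob_output_ne_le {A : RandAlg ι α β} {f : PFn ι α β} {ε : ℝ}
    (hA : A.Computes f ε) {x : ι → α} {b : β} (hb : f x = some b) :
    A.prob (fun t => t.output x ≠ b) ≤ ε := by
  linarith [hA x b hb, A.prob_not_add_succProb x b]

theorem computes_of_forall_computesP {A : RandAlg ι α β} {f : PFn ι α β} {ε : ℝ}
    (hA : ∀ ω, (A.tree ω).computesP f) (hε : 0 ≤ ε) : A.Computes f ε := by
  classical
  intro x b hb
  have : A.succProb x b = 1 := by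
    rw [succProb, ← A.sum_one]
    exact Finset.sum_congr rfl fun ω _ => if_pos (hA ω x b hb)
  linarith

theorem expCost_nonneg (A : RandAlg ι α β) (x : ι → α) : 0 ≤ A.expCost x :=
  Finset.sum_nonneg fun ω _ => mul_nonneg (A.nonneg ω) (Nat.cast_nonneg _)

theorem expCost_ofTree (t : DTree ι α β) (x : ι → α) :
    (ofTree t).expCost x = t.cost x := by
  show ∑ _ : Unit, 1 * (t.cost x : ℝ) = _
  simp

theorem expCost_map_le {ι' α' β' : Type} (A : RandAlg ι α β) {g : DTree ι α β → DTree ι' α' β'}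
    {x : ι → α} {x' : ι' → α'} (h : ∀ t, (g t).cost x' ≤ t.cost x) :
    (A.map g).expCost x' ≤ A.expCost x :=
  Finset.sum_le_sum fun ω _ =>
    mul_le_mul_of_nonneg_left (Nat.cast_le.2 (h (A.tree ω))) (A.nonneg ω)

theorem WCostLe.expCost_le {A : RandAlg ι α β} {T : ℝ} (hA : A.WCostLe T) (x : ι → α) :
    A.expCost x ≤ T := by
  calc A.expCost x ≤ ∑ ω, A.p ω * T := Finset.sum_le_sum fun ω _ => by
        by_cases h : A.p ω = 0
        · simp [h]
        · exact mul_le_mul_of_nonneg_left (hA ω h x) (A.nonneg ω)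
    _ = T := by rw [← Finset.sum_mul, A.sum_one, one_mul]

theorem expCost_graft (U : RandAlg ι α (Option β)) (B : RandAlg ι α β) (x : ι → α) :
    (U.graft B).expCost x = U.expCost x + U.prob (fun u => u.output x = none) * B.expCost x := by
  classical
  have hterm : ∀ w : U.Ω × B.Ω, U.p w.1 * B.p w.2 * ((U.tree w.1).graft (B.tree w.2)).cost x
      = U.p w.1 * (U.tree w.1).cost x * B.p w.2 +
        (if (U.tree w.1).output x = none then U.p w.1 else 0) *
          (B.p w.2 * (B.tree w.2).cost x) := by
    intro w
    cases hu : (U.tree w.1).output x with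
    | none => rw [DTree.cost_graft_of_none hu, if_pos rfl]; push_cast; ring
    | some b => rw [DTree.cost_graft_of_some hu, if_neg (by simp)]; ring
  calc (U.graft B).expCost x
      = ∑ w : U.Ω × B.Ω, (U.p w.1 * (U.tree w.1).cost x * B.p w.2 +
          (if (U.tree w.1).output x = none then U.p w.1 else 0) *
            (B.p w.2 * (B.tree w.2).cost x)) := Finset.sum_congr rfl fun w _ => hterm w
    _ = U.expCost x * ∑ σ, B.p σ + U.prob (fun u => u.output x = none) * B.expCost x := by
        simp only [Fintype.sum_prod_type, Finset.sum_add_distrib, ← Finset.mul_sum,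
          ← Finset.sum_mul, expCost, prob]
        convert rfl -- the two sides decide `_ = none` by different instances
    _ = _ := by rw [B.sum_one, mul_one]

end RandAlg

theorem le_div_add_mul_pow_of_le_add_mul {e : ℕ → ℝ} {T q N : ℝ} (hT : 0 ≤ T) (hq0 : 0 ≤ q)
    (hq1 : q < 1) (h0 : e 0 ≤ N) (hstep : ∀ k, e (k + 1) ≤ T + q * e k) :
    ∀ k, e k ≤ T / (1 - q) + N * q ^ k
  | 0 => by simpa using h0.trans (le_add_of_nonneg_left (div_nonneg hT (sub_nonneg.2 hq1.le)))
  | k + 1 => by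
    have hfix : T + q * (T / (1 - q)) = T / (1 - q) := by
      field_simp [(sub_pos.2 hq1).ne']
      ring
    calc e (k + 1) ≤ T + q * (T / (1 - q) + N * q ^ k) :=
          (hstep k).trans (by gcongr; exact le_div_add_mul_pow_of_le_add_mul hT hq0 hq1 h0 hstep k)
      _ = T / (1 - q) + N * q ^ (k + 1) := by linear_combination hfix

section Sabotage

variable {ι : Type}

theorem fsab_eq_some {f : PFn ι Bool Bool} {p : ι → Sab} {b : Bool} (h : fsab f p = some b) :
    ∃ s, IsSabotaged f s p ∧ b = s.isDagger := by
  unfold fsab at h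
  split_ifs at h with hstar hdagger
  · exact ⟨.star, hstar, (Option.some_injective _ h).symm⟩
  · exact ⟨.dagger, hdagger, (Option.some_injective _ h).symm⟩

noncomputable def sabotageIter (A : RandAlg ι Bool Bool) (fb : DTree ι Sab Bool) :
    ℕ → RandAlg ι Sab Bool
  | 0 => .ofTree fb
  | k + 1 => (A.map DTree.sabify).graft (sabotageIter A fb k)

theorem sabotageIter_computesP {f : PFn ι Bool Bool} (A : RandAlg ι Bool Bool)
    {fb : DTree ι Sab Bool} (hfb : fb.computesP (fsab f)) :
    ∀ k ω, ((sabotageIter A fb k).tree ω).computesP (fsab f)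
  | 0, _ => hfb
  | k + 1, ω => by
    intro p b hb
    obtain ⟨s, hp, rfl⟩ := fsab_eq_some hb
    change (((A.tree ω.1).sabify).graft ((sabotageIter A fb k).tree ω.2)).output p = _
    cases hu : (A.tree ω.1).sabify.output p with
    | none =>
      exact (DTree.output_graft_of_none hu).trans (sabotageIter_computesP A hfb k ω.2 p _ hb)
    | some b' =>
      exact (DTree.output_graft_of_some hu).trans (DTree.sabify_output_eq_some hp.1 hu)

theorem prob_sabify_output_eq_none_le {f : PFn ι Bool Bool} {A : RandAlg ι Bool Bool} {ε : ℝ}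
    (hA : A.Computes f ε) {s : Sab} {p : ι → Sab} (hp : IsSabotaged f s p) :
    A.prob (fun t => t.sabify.output p = none) ≤ 2 * ε := by
  obtain ⟨-, x, y, hx, hy, hxy, hpx, hpy⟩ := hp
  obtain ⟨bx, hbx⟩ := Option.isSome_iff_exists.1 hx
  obtain ⟨by', hby⟩ := Option.isSome_iff_exists.1 hy
  have hne : bx ≠ by' := fun h => hxy (by rw [hbx, hby, h])
  calc A.prob (fun t => t.sabify.output p = none)
      ≤ A.prob (fun t => t.output x ≠ bx) + A.prob (fun t => t.output y ≠ by') := by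
        refine A.prob_le_add fun t ht => ?_
        by_contra! h
        exact hne (h.1.symm.trans ((DTree.output_eq_of_sabify_eq_none ht hpx hpy).trans h.2))
    _ ≤ ε + ε := add_le_add (hA.prob_output_ne_le hbx) (hA.prob_output_ne_le hby)
    _ = 2 * ε := by ring

theorem expCost_sabotageRound_le {f : PFn ι Bool Bool} {A : RandAlg ι Bool Bool} {ε T : ℝ}
    (hA : A.Computes f ε) (hT : A.ECostLe f T) (B : RandAlg ι Sab Bool) {s : Sab} {p : ι → Sab}
    (hp : IsSabotaged f s p) :
    ((A.map DTree.sabify).graft B).expCost p ≤ T + 2 * ε * B.expCost p := by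
  obtain ⟨x, -, hx, -, -, hpx, -⟩ := hp.2
  rw [RandAlg.expCost_graft]
  gcongr
  · exact (A.expCost_map_le fun t => DTree.cost_sabify_le hpx).trans (hT x hx)
  · exact B.expCost_nonneg p
  · exact prob_sabify_output_eq_none_le hA hp

theorem expCost_sabotageIter_le {f : PFn ι Bool Bool} {A : RandAlg ι Bool Bool} {ε T : ℝ}
    (hε0 : 0 ≤ ε) (hε : ε < 1 / 2) (hA : A.Computes f ε) (hT : A.ECostLe f T)
    {fb : DTree ι Sab Bool} {N : ℝ} (hfb : ∀ p, (fb.cost p : ℝ) ≤ N)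
    {s : Sab} {p : ι → Sab} (hp : IsSabotaged f s p) (k : ℕ) :
    (sabotageIter A fb k).expCost p ≤ T / (1 - 2 * ε) + N * (2 * ε) ^ k := by
  obtain ⟨x, -, hx, -, -, -, -⟩ := hp.2
  refine le_div_add_mul_pow_of_le_add_mul (e := fun k => (sabotageIter A fb k).expCost p)
    ((A.expCost_nonneg x).trans (hT x hx)) (by linarith) (by linarith)
    ((RandAlg.expCost_ofTree fb p).trans_le (hfb p))
    (fun k => expCost_sabotageRound_le hA hT _ hp) k

theorem mul_RS_le_of_computes [Fintype ι] {f : PFn ι Bool Bool} {A : RandAlg ι Bool Bool}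
    {ε T : ℝ} (hε0 : 0 ≤ ε) (hε : ε < 1 / 2) (hT0 : 0 ≤ T) (hA : A.Computes f ε)
    (hT : A.ECostLe f T) : (1 - 2 * ε) * RS f ≤ T := by
  obtain ⟨fb, hfb, hfb_cost⟩ := DTree.exists_computesP_cost_le_card (fsab f)
  have hbound : ∀ k : ℕ, RS f ≤ T / (1 - 2 * ε) + Fintype.card ι * (2 * ε) ^ k := by
    intro k
    have hzero := RandAlg.computes_of_forall_computesP (sabotageIter_computesP A hfb k) le_rfl
    refine csInf_le ⟨0, fun _ h => h.1⟩
      ⟨add_nonneg (div_nonneg hT0 (by linarith)) (by positivity), sabotageIter A fb k, hzero, ?_⟩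
    intro p hp
    obtain ⟨b, hb⟩ := Option.isSome_iff_exists.1 hp
    obtain ⟨s, hs, -⟩ := fsab_eq_some hb
    exact expCost_sabotageIter_le hε0 hε hA hT (fun p => by exact_mod_cast hfb_cost p) hs k
  have hlim : Filter.Tendsto (fun k : ℕ => T / (1 - 2 * ε) + Fintype.card ι * (2 * ε) ^ k)
      Filter.atTop (nhds (T / (1 - 2 * ε))) := by
    simpa using ((tendsto_pow_atTop_nhds_zero_of_lt_one (by linarith) (by linarith)).const_mul
      (Fintype.card ι : ℝ)).const_add (T / (1 - 2 * ε))
  have := ge_of_tendsto' hlim hbound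
  rwa [le_div_iff₀ (by linarith), mul_comm] at this

end Sabotage

section Complexity

variable {ι α β : Type} [Fintype ι] [Nonempty α] [Nonempty β]

theorem exists_computes_wCostLe_card (f : PFn ι α β) {ε : ℝ} (hε : 0 ≤ ε) :
    ∃ A : RandAlg ι α β, A.Computes f ε ∧ A.WCostLe (Fintype.card ι) := by
  obtain ⟨t, ht, ht_cost⟩ := DTree.exists_computesP_cost_le_card f
  exact ⟨.ofTree t, RandAlg.computes_of_forall_computesP (fun _ => ht) hε,
    fun _ _ x => by exact_mod_cast ht_cost x⟩

theorem Rbar_le_Rw (f : PFn ι α β) {ε : ℝ} (hε : 0 ≤ ε) : Rbar ε f ≤ Rw ε f := by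
  obtain ⟨A, hA, hA_cost⟩ := exists_computes_wCostLe_card f hε
  refine csInf_le_csInf ⟨0, fun _ h => h.1⟩ ⟨_, Nat.cast_nonneg _, A, hA, hA_cost⟩ ?_
  rintro T ⟨hT0, B, hB, hB_cost⟩
  exact ⟨hT0, B, hB, fun x _ => hB_cost.expCost_le x⟩

theorem mul_RS_le_Rbar (f : PFn ι Bool Bool) {ε : ℝ} (hε0 : 0 ≤ ε)
    (hε : ε < 1 / 2) : (1 - 2 * ε) * RS f ≤ Rbar ε f := by
  obtain ⟨A, hA, hA_cost⟩ := exists_computes_wCostLe_card f hε0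
  refine le_csInf ⟨_, Nat.cast_nonneg _, A, hA, fun x _ => hA_cost.expCost_le x⟩ ?_
  rintro T ⟨hT0, B, hB, hB_cost⟩
  exact mul_RS_le_of_computes hε0 hε hT0 hB hB_cost

end Complexity

/-- **Randomized sabotage complexity lower bounds randomized query complexity.**
For every partial Boolean function `f` and `ε ∈ [0, 1/2)`:
`R_ε(f) ≥ R̄_ε(f) ≥ (1 − 2ε) · RS(f)`; in particular `R(f) ≥ RS(f)/3`,
i.e. `R(f) = Ω(RS(f))`. -/
theorem RS_lower_bounds_R {n : ℕ} (f : PFn (Fin n) Bool Bool)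
    (ε : ℝ) (hε0 : 0 ≤ ε) (hε : ε < 1/2) :
    (Rbar ε f ≤ Rw ε f ∧ (1 - 2*ε) * RS f ≤ Rbar ε f) ∧ RS f / 3 ≤ Rb f := by
  refine ⟨⟨Rbar_le_Rw f hε0, mul_RS_le_Rbar f hε0 hε⟩, ?_⟩
  have h := (mul_RS_le_Rbar f (ε := 1 / 3) (by norm_num) (by norm_num)).trans
    (Rbar_le_Rw f (by norm_num))
  unfold Rb
  linarith
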